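/- If N is even, then the spectrum of the Harper matrix h(a, b, ε) is symmetric about zero: for all real a, b, ε and every complex λ, λ is an eigenvalue of h(a, b, ε) if and only if −λ is an eigenvalue of h(a, b, ε). -/

import Mathlib

open Matrix Complex

/-- The primitive `N`-th root of unity `ω = exp(2πi/N)`. -/
noncomputable def omegaN (N : ℕ) : ℂ := Complex.exp (2 * (Real.pi : ℂ) * Complex.I / (N : ℂ))

/-- The clock matrix `Z` with `Z_{jk} = ω^j` if `j = k`, `0` otherwise. -/
noncomputable def clockZ (N : ℕ) : Matrix (Fin N) (Fin N) ℂ :=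
  Matrix.diagonal fun j => omegaN N ^ (j : ℕ)

/-- The shift matrix `X` with `X_{jk} = 1` if `j = k + 1 (mod N)`, `0` otherwise. -/
def shiftX (N : ℕ) : Matrix (Fin N) (Fin N) ℂ :=
  Matrix.of fun j k => if (j : ℕ) = ((k : ℕ) + 1) % N then 1 else 0

/-- The shifted Harper matrix
`h(a,b,ε) = (a/2)·e^{ib}·X + (a/2)·e^{−ib}·Xᴴ + (ε/2)·(Z + Zᴴ)`. -/
noncomputable def harper (N : ℕ) (a b ε : ℝ) : Matrix (Fin N) (Fin N) ℂ :=
  ((a : ℂ) / 2 * Complex.exp ((b : ℂ) * Complex.I)) • shiftX N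
  + ((a : ℂ) / 2 * Complex.exp (-(b : ℂ) * Complex.I)) • (shiftX N)ᴴ
  + ((ε : ℂ) / 2) • (clockZ N + (clockZ N)ᴴ)

/-- The parity matrix `P` with `P_{jk} = 1` if `j + k ≡ 0 (mod N)`, `0` otherwise. -/
def parityP (N : ℕ) : Matrix (Fin N) (Fin N) ℂ :=
  Matrix.of fun j k => if ((j : ℕ) + (k : ℕ)) % N = 0 then 1 else 0

/-- The discrete Fourier transform matrix `Q` with `Q_{jk} = ω^{jk}/√N`. -/
noncomputable def dftQ (N : ℕ) : Matrix (Fin N) (Fin N) ℂ :=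
  Matrix.of fun j k => omegaN N ^ ((j : ℕ) * (k : ℕ)) / (Real.sqrt N : ℂ)

/-! For even `N` the Harper matrix anticommutes with the invertible matrix `W = D·P`, where
`D = diag((-1)^j)` and `P` is the cyclic shift by `N/2`. Conjugation by `D` fixes `Z` and flips the
sign of `X` and `Xᴴ`, since they move `j` by `±1` and `(-1)^j` is well defined on `ℤ/N` for even `N`;
conjugation by `P` fixes `X` and multiplies `Z` by `ω^{N/2} = -1`. Hence `W h W⁻¹ = -h`, and
conjugate elements have the same spectrum. -/

theorem spectrum.neg_eq_self_of_isUnit_of_mul_eq_neg_mul {R A : Type*} [CommRing R] [Ring A]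
    [Algebra R A] {a u : A} (hu : IsUnit u) (h : u * a = -(a * u)) :
    -spectrum R a = spectrum R a := by
  obtain ⟨u, rfl⟩ := hu
  have hconj : ↑u * a * ↑u⁻¹ = -a := by rw [h, neg_mul, Units.mul_inv_cancel_right]
  rw [spectrum.neg_eq, ← hconj, spectrum.units_conjugate]

section SignedPerm

variable {n R : Type*} [Fintype n] [DecidableEq n] [CommRing R]

def signedPermMatrix (σ : n → R) (e : Equiv.Perm n) : Matrix n n R :=
  diagonal σ * e.permMatrix R

theorem isUnit_signedPermMatrix {σ : n → R} (hσ : IsUnit σ) (e : Equiv.Perm n) :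
    IsUnit (signedPermMatrix σ e) := by
  refine (isUnit_diagonal.mpr hσ).mul ?_
  rw [isUnit_iff_isUnit_det, det_permutation]
  exact (Units.isUnit _).map (Int.castRingHom R)

theorem signedPermMatrix_mul_apply (σ : n → R) (e : Equiv.Perm n) (A : Matrix n n R) (j k : n) :
    (signedPermMatrix σ e * A) j k = σ j * A (e j) k := by
  rw [signedPermMatrix, Matrix.mul_assoc, PEquiv.toMatrix_toPEquiv_mul, diagonal_mul,
    submatrix_apply, id]

theorem mul_signedPermMatrix_apply (σ : n → R) (e : Equiv.Perm n) (A : Matrix n n R) (j k : n) :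
    (A * signedPermMatrix σ e) j k = A j (e.symm k) * σ (e.symm k) := by
  rw [signedPermMatrix, ← Matrix.mul_assoc, PEquiv.mul_toMatrix_toPEquiv, submatrix_apply, id,
    mul_diagonal]

theorem signedPermMatrix_mul_eq_neg {σ : n → R} {e : Equiv.Perm n} {A : Matrix n n R}
    (h : ∀ j k, σ j * A (e j) (e k) = -(A j k * σ k)) :
    signedPermMatrix σ e * A = -(A * signedPermMatrix σ e) := by
  ext j k
  obtain ⟨k, rfl⟩ := e.surjective k
  rw [signedPermMatrix_mul_apply, neg_apply, mul_signedPermMatrix_apply, Equiv.symm_apply_apply,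
    h]

theorem signedPermMatrix_mul_diagonal_eq_neg (σ : n → R) {e : Equiv.Perm n} {d : n → R}
    (hd : ∀ j, d (e j) = -d j) :
    signedPermMatrix σ e * diagonal d = -(diagonal d * signedPermMatrix σ e) := by
  refine signedPermMatrix_mul_eq_neg fun j k => ?_
  rcases eq_or_ne j k with rfl | hjk
  · rw [diagonal_apply_eq, diagonal_apply_eq, hd]
    ring
  · rw [diagonal_apply_ne _ hjk, diagonal_apply_ne _ (e.injective.ne hjk), mul_zero, zero_mul,
      neg_zero]

end SignedPerm

section Harper

variable {N : ℕ}

theorem pow_finVal_add {M : Type*} [Monoid M] {ζ : M} (hζ : ζ ^ N = 1) (p q : Fin N) :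
    ζ ^ ((p + q : Fin N) : ℕ) = ζ ^ (p : ℕ) * ζ ^ (q : ℕ) := by
  rw [Fin.val_add, ← pow_eq_pow_mod _ hζ, pow_add]

theorem isPrimitiveRoot_omegaN (hN : N ≠ 0) : IsPrimitiveRoot (omegaN N) N :=
  Complex.isPrimitiveRoot_exp N hN

theorem omegaN_pow_half (hN : N ≠ 0) (hNe : Even N) : omegaN N ^ (N / 2) = -1 :=
  ((isPrimitiveRoot_omegaN hN).pow (Nat.pos_of_ne_zero hN)
    (Nat.div_two_mul_two_of_even hNe).symm).eq_neg_one_of_two_right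

theorem conjTranspose_clockZ :
    (clockZ N)ᴴ = diagonal fun j : Fin N => star (omegaN N) ^ (j : ℕ) := by
  simp only [clockZ, diagonal_conjTranspose, Pi.star_def, star_pow]

variable [NeZero N]

theorem neg_one_pow_finVal_add_one {R : Type*} [Ring R] (hN : Even N) (k : Fin N) :
    (-1 : R) ^ ((k + 1 : Fin N) : ℕ) = -(-1) ^ (k : ℕ) := by
  rw [pow_finVal_add hN.neg_one_pow, Fin.val_one', ← pow_eq_pow_mod _ hN.neg_one_pow, pow_one,
    mul_neg_one]

theorem shiftX_apply (j k : Fin N) : shiftX N j k = if j = k + 1 then 1 else 0 := by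
  simp only [shiftX, of_apply, Fin.ext_iff, Fin.val_add, Fin.val_one', Nat.add_mod_mod]

theorem conjTranspose_shiftX_apply (j k : Fin N) :
    (shiftX N)ᴴ j k = if k = j + 1 then 1 else 0 := by
  rw [conjTranspose_apply, shiftX_apply, apply_ite star, star_one, star_zero]

def chiralMatrix (m : Fin N) : Matrix (Fin N) (Fin N) ℂ :=
  signedPermMatrix (fun j : Fin N => (-1 : ℂ) ^ (j : ℕ)) (Equiv.addRight m)

theorem isUnit_chiralMatrix (m : Fin N) : IsUnit (chiralMatrix m) :=
  isUnit_signedPermMatrix (Pi.isUnit_iff.mpr fun _ => isUnit_neg_one.pow _) _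

theorem chiralMatrix_mul_shiftX (hN : Even N) (m : Fin N) :
    chiralMatrix m * shiftX N = -(shiftX N * chiralMatrix m) := by
  refine signedPermMatrix_mul_eq_neg fun j k => ?_
  simp only [Equiv.coe_addRight, shiftX_apply, add_right_comm k m 1, add_left_inj]
  split_ifs with hjk
  · rw [hjk, neg_one_pow_finVal_add_one hN]
    ring
  · ring

theorem chiralMatrix_mul_conjTranspose_shiftX (hN : Even N) (m : Fin N) :
    chiralMatrix m * (shiftX N)ᴴ = -((shiftX N)ᴴ * chiralMatrix m) := by
  refine signedPermMatrix_mul_eq_neg fun j k => ?_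
  simp only [Equiv.coe_addRight, conjTranspose_shiftX_apply, add_right_comm j m 1, add_left_inj]
  split_ifs with hjk
  · rw [hjk, neg_one_pow_finVal_add_one hN]
    ring
  · ring

theorem chiralMatrix_mul_diagonal_pow {m : Fin N} {ζ : ℂ} (hζ : ζ ^ N = 1)
    (hm : ζ ^ (m : ℕ) = -1) :
    chiralMatrix m * diagonal (fun j : Fin N => ζ ^ (j : ℕ))
      = -(diagonal (fun j : Fin N => ζ ^ (j : ℕ)) * chiralMatrix m) :=
  signedPermMatrix_mul_diagonal_eq_neg _ fun j => by
    rw [Equiv.coe_addRight, pow_finVal_add hζ, hm, mul_neg_one]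

theorem chiralMatrix_mul_harper (hNe : Even N) {m : Fin N} (hm : (m : ℕ) = N / 2) (a b ε : ℝ) :
    chiralMatrix m * harper N a b ε = -(harper N a b ε * chiralMatrix m) := by
  have hω : omegaN N ^ N = 1 := (isPrimitiveRoot_omegaN (NeZero.ne N)).pow_eq_one
  have hωm : omegaN N ^ (m : ℕ) = -1 := hm ▸ omegaN_pow_half (NeZero.ne N) hNe
  have hZ : chiralMatrix m * clockZ N = -(clockZ N * chiralMatrix m) :=
    chiralMatrix_mul_diagonal_pow hω hωm
  have hZh : chiralMatrix m * (clockZ N)ᴴ = -((clockZ N)ᴴ * chiralMatrix m) := by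
    rw [conjTranspose_clockZ]
    exact chiralMatrix_mul_diagonal_pow (by rw [← star_pow, hω, star_one])
      (by rw [← star_pow, hωm, star_neg, star_one])
  simp only [harper, Matrix.mul_add, Matrix.add_mul, Matrix.mul_smul, Matrix.smul_mul,
    chiralMatrix_mul_shiftX hNe, chiralMatrix_mul_conjTranspose_shiftX hNe, hZ, hZh, smul_neg,
    smul_add, neg_add]

end Harper

/-- For `N` even, the spectrum of the Harper matrix is symmetric about zero. -/
theorem harper_spectrum_symm_even (N : ℕ) (hN : 2 ≤ N) (hNe : Even N) (a b ε : ℝ) (lam : ℂ) :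
    lam ∈ spectrum ℂ (harper N a b ε) ↔ -lam ∈ spectrum ℂ (harper N a b ε) := by
  have : NeZero N := ⟨by omega⟩
  have hsymm : -spectrum ℂ (harper N a b ε) = spectrum ℂ (harper N a b ε) :=
    spectrum.neg_eq_self_of_isUnit_of_mul_eq_neg_mul (isUnit_chiralMatrix ⟨N / 2, by omega⟩)
      (chiralMatrix_mul_harper hNe rfl a b ε)
  rw [← hsymm, Set.neg_mem_neg, hsymm]
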